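/- For every ℓ ≥ 1, the digit-reversal permutation R_k(ℓ) of {1,…,k^ℓ} is attainable from k^ℓ chips, i.e., there is a reachable stable configuration whose associated permutation is R_k(ℓ). -/
import Mathlib


/-- A firing step for `N` labeled chips on the infinite directed `k`-ary tree with
vertex set `{1, 2, 3, …}`, root `1`, where the `j`-th child (`1 ≤ j ≤ k`) of vertex `v`
is `k*(v-1)+j+1`.  A configuration assigns to each chip (element of `Fin N`,
representing labels `1,…,N`) a vertex.  A step picks `k` chips `t 0 < t 1 < ⋯ < t (k-1)`
all on a common vertex `v` and sends the `j`-th smallest to the `j`-th child. -/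
def FireStep (k N : ℕ) (c c' : Fin N → ℕ) : Prop :=
  ∃ (v : ℕ) (t : Fin k → Fin N),
    StrictMono t ∧
    (∀ j, c (t j) = v) ∧
    (∀ j : Fin k, c' (t j) = k * (v - 1) + (j : ℕ) + 2) ∧
    (∀ i : Fin N, (∀ j, i ≠ t j) → c' i = c i)

/-- Reachable from the initial configuration of `k^ℓ` chips all on the root. -/
def Reachable (k ℓ : ℕ) (c : Fin (k ^ ℓ) → ℕ) : Prop :=
  Relation.ReflTransGen (FireStep k (k ^ ℓ)) (fun _ => 1) c

/-- A configuration is stable if every vertex holds fewer than `k` chips. -/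
def Stable (k N : ℕ) (c : Fin N → ℕ) : Prop :=
  ∀ v : ℕ, (Finset.univ.filter (fun i => c i = v)).card < k

/-- `layerStart k m` is the leftmost (smallest-numbered) vertex on layer `m+1`;
the vertices of layer `m+1` read left to right are `layerStart k m + p` for `0 ≤ p < k^m`. -/
def layerStart (k : ℕ) : ℕ → ℕ
  | 0 => 1
  | m + 1 => k * (layerStart k m - 1) + 2

/-- `σ` is the permutation associated to some reachable stable configuration of `k^ℓ`
chips: `σ p` (0-based, representing label `σ p + 1`) is the chip on the `p`-th leftmost
vertex of layer `ℓ+1`. -/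
def Attainable (k ℓ : ℕ) (σ : Equiv.Perm (Fin (k ^ ℓ))) : Prop :=
  ∃ c : Fin (k ^ ℓ) → ℕ, Reachable k ℓ c ∧ Stable k (k ^ ℓ) c ∧
    ∀ p : Fin (k ^ ℓ), c (σ p) = layerStart k ℓ + (p : ℕ)

/-- `digitRev k ℓ n` : the radix-`k` digit reversal of `n`, viewed as a string of exactly
`ℓ` base-`k` digits (padded with leading zeros). -/
def digitRev (k : ℕ) : ℕ → ℕ → ℕ
  | 0, _ => 0
  | ℓ + 1, n => n % k * k ^ ℓ + digitRev k ℓ (n / k)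

lemma layerStart_pos (k m : ℕ) : 1 ≤ layerStart k m := by
  cases m with
  | zero => simp [layerStart]
  | succ m => simp [layerStart]

lemma child_vtx (k m p j : ℕ) :
    k * (layerStart k m + p - 1) + j + 2 = layerStart k (m+1) + (k*p + j) := by
  have h := layerStart_pos k m
  obtain ⟨q, hq⟩ : ∃ q, layerStart k m = q + 1 := ⟨layerStart k m - 1, by omega⟩
  have h2 : layerStart k (m+1) = k * q + 2 := by simp [layerStart, hq]
  rw [hq, h2]
  have : q + 1 + p - 1 = q + p := by omega
  rw [this, Nat.mul_add]
  ring

lemma digitRev_succ (k ℓ n : ℕ) :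
    digitRev k (ℓ+1) n = n % k * k ^ ℓ + digitRev k ℓ (n / k) := rfl

lemma digitRev_lt (k : ℕ) (hk : 1 ≤ k) : ∀ ℓ n, digitRev k ℓ n < k ^ ℓ
  | 0, n => by simp [digitRev]
  | ℓ+1, n => by
    have h1 := digitRev_lt k hk ℓ (n / k)
    have h2 : n % k < k := Nat.mod_lt _ hk
    have h3 : (n % k + 1) * k ^ ℓ ≤ k * k ^ ℓ := Nat.mul_le_mul_right _ (by omega)
    have h4 : (n % k + 1) * k ^ ℓ = n % k * k ^ ℓ + k ^ ℓ := by ring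
    have h5 : k * k ^ ℓ = k ^ (ℓ+1) := by ring
    simp only [digitRev]
    omega

lemma digitRev_high (k : ℕ) (hk : 1 ≤ k) :
    ∀ ℓ d m, d < k → m < k ^ ℓ → digitRev k (ℓ+1) (d * k ^ ℓ + m) = digitRev k ℓ m * k + d := by
  intro ℓ
  induction ℓ with
  | zero =>
    intro d m hd hm
    simp only [pow_zero] at hm
    interval_cases m
    simp [digitRev, Nat.mod_eq_of_lt hd, Nat.div_eq_of_lt hd]
  | succ ℓ ih =>
    intro d m hd hm
    have hk0 : 0 < k := hk
    have e1 : d * k ^ (ℓ+1) + m = k * (d * k ^ ℓ) + m := by ring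
    have e2 : (k * (d * k ^ ℓ) + m) % k = m % k := Nat.mul_add_mod _ _ _
    have e3 : (k * (d * k ^ ℓ) + m) / k = d * k ^ ℓ + m / k := Nat.mul_add_div hk0 _ _
    have hmk : m / k < k ^ ℓ := Nat.div_lt_of_lt_mul (by rw [← pow_succ']; exact hm)
    rw [e1, digitRev_succ, e2, e3, ih d (m/k) hd hmk, digitRev_succ]
    ring

lemma digitRev_invol (k : ℕ) (hk : 1 ≤ k) :
    ∀ ℓ n, n < k ^ ℓ → digitRev k ℓ (digitRev k ℓ n) = n := by
  intro ℓ
  induction ℓ with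
  | zero => intro n hn; simp only [pow_zero] at hn; interval_cases n; simp [digitRev]
  | succ ℓ ih =>
    intro n hn
    have hdiv : n / k < k ^ ℓ := Nat.div_lt_of_lt_mul (by rw [← pow_succ']; exact hn)

    have hmod : n % k < k := Nat.mod_lt _ hk
    have hrev : digitRev k ℓ (n / k) < k ^ ℓ := digitRev_lt k hk ℓ _
    show digitRev k (ℓ+1) (n % k * k ^ ℓ + digitRev k ℓ (n / k)) = n
    rw [digitRev_high k hk ℓ _ _ hmod hrev, ih _ hdiv]
    exact Nat.div_add_mod' n k

lemma key (k : ℕ) (hk : 2 ≤ k) :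
    ∀ ℓ : ℕ, ∀ {N : ℕ} (m p : ℕ) (e : Fin (k ^ ℓ) → Fin N), StrictMono e →
    ∀ d : Fin N → ℕ, (∀ i, d (e i) = layerStart k m + p) →
    ∃ d2 : Fin N → ℕ,
      Relation.ReflTransGen (FireStep k N) d d2 ∧
      (∀ i, d2 (e i) = layerStart k (m + ℓ) + (p * k ^ ℓ + digitRev k ℓ (i : ℕ))) ∧
      (∀ j : Fin N, (∀ i, j ≠ e i) → d2 j = d j) := by
  intro ℓ
  induction ℓ with
  | zero =>
    intro N m p e he d hd
    exact ⟨d, .refl, fun i => by simpa [digitRev] using hd i, fun _ _ => rfl⟩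
  | succ ℓ IH =>
    intro N m p e he d hd
    classical
    have hk0 : 0 < k := by omega
    have hK : 0 < k ^ ℓ := pow_pos hk0 ℓ
    have hpow : k ^ (ℓ+1) = k ^ ℓ * k := pow_succ k ℓ
    have hidx : ∀ s : ℕ, s < k ^ ℓ → ∀ j : Fin k, s * k + (j : ℕ) < k ^ (ℓ+1) := by
      intro s hs j
      have h1 : (s + 1) * k ≤ k ^ ℓ * k := Nat.mul_le_mul_right _ (by omega)
      have h2 : (s + 1) * k = s * k + k := by ring
      have := j.isLt
      omega
    -- Phase 1: fire the root-of-subtree vertex k^ℓ times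
    have phase1 : ∀ s, s ≤ k ^ ℓ → ∃ d1 : Fin N → ℕ,
        Relation.ReflTransGen (FireStep k N) d d1 ∧
        (∀ i : Fin (k ^ (ℓ+1)), (i : ℕ) < s * k →
            d1 (e i) = layerStart k (m+1) + (k * p + (i : ℕ) % k)) ∧
        (∀ i : Fin (k ^ (ℓ+1)), s * k ≤ (i : ℕ) → d1 (e i) = layerStart k m + p) ∧
        (∀ j : Fin N, (∀ i, j ≠ e i) → d1 j = d j) := by
      intro s
      induction s with
      | zero =>
        intro _
        exact ⟨d, .refl, fun i h => absurd h (by omega), fun i _ => hd i, fun _ _ => rfl⟩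
      | succ s ih =>
        intro hs
        obtain ⟨d1, hreach, hdone, hpend, hoff⟩ := ih (by omega)
        set t : Fin k → Fin N := fun j => e ⟨s * k + (j : ℕ), hidx s (by omega) j⟩ with ht
        have ht_inj : ∀ j j' : Fin k, t j = t j' → j = j' := by
          intro j j' h
          have h2 : s * k + (j : ℕ) = s * k + (j' : ℕ) := congrArg Fin.val (he.injective h)
          exact Fin.ext (by omega)
        set d1' : Fin N → ℕ := fun x =>
          if h : ∃ j : Fin k, x = t j
          then layerStart k (m+1) + (k * p + ((Classical.choose h : Fin k) : ℕ))
          else d1 x with hd1'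
        have hd1't : ∀ j : Fin k, d1' (t j) = layerStart k (m+1) + (k * p + (j : ℕ)) := by
          intro j
          have hex : ∃ j' : Fin k, t j = t j' := ⟨j, rfl⟩
          have hch : Classical.choose hex = j :=
            ht_inj _ _ (Classical.choose_spec hex).symm
          have : d1' (t j) = layerStart k (m+1) + (k * p + ((Classical.choose hex : Fin k) : ℕ)) := by
            simp only [hd1', dif_pos hex]
          rw [this, hch]
        have hd1'o : ∀ x : Fin N, (∀ j, x ≠ t j) → d1' x = d1 x := by
          intro x hx
          have : ¬ ∃ j : Fin k, x = t j := by rintro ⟨j, rfl⟩; exact hx j rfl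
          simp only [hd1', dif_neg this]
        have hstep : FireStep k N d1 d1' := by
          refine ⟨layerStart k m + p, t, ?_, ?_, ?_, hd1'o⟩
          · intro j j' hj
            apply he
            have h1 : (j : ℕ) < (j' : ℕ) := hj
            show s * k + (j : ℕ) < s * k + (j' : ℕ)
            omega
          · intro j
            exact hpend ⟨s * k + (j : ℕ), hidx s (by omega) j⟩ (Nat.le_add_right _ _)
          · intro j
            rw [hd1't j, child_vtx]
        refine ⟨d1', hreach.tail hstep, ?_, ?_, ?_⟩
        · intro i hi
          by_cases hcase : (i : ℕ) < s * k
          · rw [hd1'o (e i) ?_, hdone i hcase]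
            intro j hij
            have h2 : (i : ℕ) = s * k + (j : ℕ) := congrArg Fin.val (he.injective hij)
            omega
          · have hik : (i : ℕ) < (s+1) * k := hi
            have hsk : (s+1) * k = s * k + k := by ring
            have hjlt : (i : ℕ) - s * k < k := by omega
            have hei : e i = t ⟨(i : ℕ) - s * k, hjlt⟩ :=
              congrArg e (Fin.ext (show (i : ℕ) = s * k + ((i : ℕ) - s * k) by omega))
            rw [hei, hd1't ⟨(i : ℕ) - s * k, hjlt⟩]
            have hmod : (i : ℕ) % k = (i : ℕ) - s * k := by
              have h1 : (i : ℕ) = s * k + ((i : ℕ) - s * k) := by omega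
              conv_lhs => rw [h1]
              rw [Nat.add_comm, Nat.add_mul_mod_self_right, Nat.mod_eq_of_lt hjlt]
            rw [hmod]
        · intro i hi
          have hsk : (s+1) * k = s * k + k := by ring
          rw [hd1'o (e i) ?_, hpend i (by omega)]
          intro j hij
          have h2 : (i : ℕ) = s * k + (j : ℕ) := congrArg Fin.val (he.injective hij)
          have := j.isLt
          omega
        · intro x hx
          rw [hd1'o x fun j => hx _, hoff x hx]
    obtain ⟨d1, hreach1, h1, -, hoff1⟩ := phase1 (k ^ ℓ) le_rfl
    have h1' : ∀ i : Fin (k ^ (ℓ+1)),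
        d1 (e i) = layerStart k (m+1) + (k * p + (i : ℕ) % k) := by
      intro i
      exact h1 i (by rw [← hpow]; exact i.isLt)
    -- Phase 2: recurse on each of the k subtrees
    have hbnd : ∀ (i : Fin (k ^ ℓ)) (r : ℕ), r < k → (i : ℕ) * k + r < k ^ (ℓ+1) := by
      intro i r hr
      have h1 : ((i : ℕ) + 1) * k ≤ k ^ ℓ * k := Nat.mul_le_mul_right _ i.isLt
      have h2 : ((i : ℕ) + 1) * k = (i : ℕ) * k + k := by ring
      omega
    have phase2 : ∀ r, r ≤ k → ∃ d2 : Fin N → ℕ,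
        Relation.ReflTransGen (FireStep k N) d1 d2 ∧
        (∀ i : Fin (k ^ (ℓ+1)), (i : ℕ) % k < r →
            d2 (e i) = layerStart k (m+1+ℓ) +
              ((k * p + (i : ℕ) % k) * k ^ ℓ + digitRev k ℓ ((i : ℕ) / k))) ∧
        (∀ i : Fin (k ^ (ℓ+1)), r ≤ (i : ℕ) % k →
            d2 (e i) = layerStart k (m+1) + (k * p + (i : ℕ) % k)) ∧
        (∀ j : Fin N, (∀ i, j ≠ e i) → d2 j = d1 j) := by
      intro r
      induction r with
      | zero =>
        intro _
        exact ⟨d1, .refl, fun i h => absurd h (by omega), fun i _ => h1' i, fun _ _ => rfl⟩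
      | succ r ih =>
        intro hr
        obtain ⟨d2, hreach2, hdone2, hpend2, hoff2⟩ := ih (by omega)
        set er : Fin (k ^ ℓ) → Fin N := fun i => e ⟨(i : ℕ) * k + r, hbnd i r (by omega)⟩
          with her
        have her_mono : StrictMono er := by
          intro i i' hii
          apply he
          have h1 : (i : ℕ) < (i' : ℕ) := hii
          have h2 : (i : ℕ) * k < (i' : ℕ) * k := (Nat.mul_lt_mul_right hk0).mpr h1
          show (i : ℕ) * k + r < (i' : ℕ) * k + r
          omega
        have hmodr : ∀ i : Fin (k ^ ℓ), ((i : ℕ) * k + r) % k = r := by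
          intro i
          have h2 : (k * (i : ℕ) + r) % k = r % k := Nat.mul_add_mod _ _ _
          have h3 : (i : ℕ) * k = k * (i : ℕ) := Nat.mul_comm _ _
          rw [h3, h2, Nat.mod_eq_of_lt (by omega)]
        have hd2r : ∀ i : Fin (k ^ ℓ), d2 (er i) = layerStart k (m+1) + (k * p + r) := by
          intro i
          have h4 : r ≤ ((i : ℕ) * k + r) % k := (hmodr i).ge
          have h5 := hpend2 ⟨(i : ℕ) * k + r, hbnd i r (by omega)⟩ h4
          rw [show ((⟨(i : ℕ) * k + r, hbnd i r (by omega)⟩ : Fin (k ^ (ℓ+1))) : ℕ) % k = r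
            from hmodr i] at h5
          exact h5
        obtain ⟨d3, hreach3, h3, hoff3⟩ := IH (m+1) (k * p + r) er her_mono d2 hd2r
        have hnotr : ∀ i : Fin (k ^ (ℓ+1)), (i : ℕ) % k ≠ r → ∀ i', e i ≠ er i' := by
          intro i hi i' hii
          apply hi
          have h2 : (i : ℕ) = (i' : ℕ) * k + r := congrArg Fin.val (he.injective hii)
          rw [h2, hmodr i']
        refine ⟨d3, hreach2.trans hreach3, ?_, ?_, ?_⟩
        · intro i hi
          by_cases hcase : (i : ℕ) % k = r
          · have hdiv : (i : ℕ) / k < k ^ ℓ := by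
              apply Nat.div_lt_of_lt_mul
              rw [← pow_succ']; exact i.isLt
            have hei : e i = er ⟨(i : ℕ) / k, hdiv⟩ :=
              congrArg e (Fin.ext (show (i : ℕ) = (i : ℕ) / k * k + r by
                rw [← hcase]; exact (Nat.div_add_mod' (i : ℕ) k).symm))
            rw [hei, h3 ⟨(i : ℕ) / k, hdiv⟩]
            simp only [hcase]
          · have hlt : (i : ℕ) % k < r := by omega
            rw [hoff3 (e i) (hnotr i hcase), hdone2 i hlt]
        · intro i hi
          have hne : (i : ℕ) % k ≠ r := by omega
          rw [hoff3 (e i) (hnotr i hne), hpend2 i (by omega)]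
        · intro x hx
          rw [hoff3 x fun i' => hx _, hoff2 x hx]
    obtain ⟨d2, hreach2, h2, -, hoff2⟩ := phase2 k le_rfl
    refine ⟨d2, hreach1.trans hreach2, ?_, ?_⟩
    · intro i
      have hval := h2 i (Nat.mod_lt _ hk0)
      rw [digitRev_succ]
      have harith : ∀ x : ℕ, (k * p + x) * k ^ ℓ = p * k ^ (ℓ+1) + x * k ^ ℓ := by
        intro x; rw [pow_succ]; ring
      have harith' := harith ((i : ℕ) % k)
      have hls : layerStart k (m+1+ℓ) = layerStart k (m+(ℓ+1)) := by
        rw [show m+1+ℓ = m+(ℓ+1) by omega]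
      omega
    · intro x hx
      rw [hoff2 x hx, hoff1 x hx]

/-- The digit-reversal permutation `R_k(ℓ)` (0-based: `p ↦ digitRev k ℓ p`) is attainable
from `k^ℓ` chips. -/
theorem stmt6 (k ℓ : ℕ) (hk : 2 ≤ k) (hℓ : 1 ≤ ℓ) :
    ∃ σ : Equiv.Perm (Fin (k ^ ℓ)),
      (∀ p : Fin (k ^ ℓ), (σ p : ℕ) = digitRev k ℓ (p : ℕ)) ∧ Attainable k ℓ σ := by
  classical
  have hk1 : 1 ≤ k := by omega
  have hb : ∀ n : Fin (k ^ ℓ), digitRev k ℓ (n : ℕ) < k ^ ℓ := fun n => digitRev_lt k hk1 ℓ _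
  set f : Fin (k ^ ℓ) → Fin (k ^ ℓ) := fun n => ⟨digitRev k ℓ (n : ℕ), hb n⟩ with hf
  have hinv : Function.Involutive f := by
    intro n
    exact Fin.ext (digitRev_invol k hk1 ℓ (n : ℕ) n.isLt)
  refine ⟨hinv.toPerm f, ?_, ?_⟩
  · intro p
    simp [Function.Involutive.coe_toPerm, hf]
  · set c : Fin (k ^ ℓ) → ℕ := fun i => layerStart k ℓ + digitRev k ℓ (i : ℕ) with hc
    refine ⟨c, ?_, ?_, ?_⟩
    · obtain ⟨d2, hreach, h2, -⟩ :=
        key k hk ℓ (N := k ^ ℓ) 0 0 id strictMono_id (fun _ => 1) (fun i => by simp [layerStart])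
      have hd2 : d2 = c := by
        funext i
        have := h2 i
        simpa [layerStart, hc] using this
      exact hd2 ▸ hreach
    · intro v
      have hcinj : Function.Injective c := by
        intro a b hab
        have h1 : digitRev k ℓ (a : ℕ) = digitRev k ℓ (b : ℕ) := by
          simp only [hc] at hab; omega
        have := congrArg (digitRev k ℓ) h1
        rw [digitRev_invol k hk1 ℓ _ a.isLt, digitRev_invol k hk1 ℓ _ b.isLt] at this
        exact Fin.ext this
      have hle : (Finset.univ.filter (fun i => c i = v)).card ≤ 1 := by
        apply Finset.card_le_one.mpr
        intro a ha b hb2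
        simp only [Finset.mem_filter] at ha hb2
        exact hcinj (ha.2.trans hb2.2.symm)
      omega
    · intro p
      show layerStart k ℓ + digitRev k ℓ ((hinv.toPerm f p : Fin (k ^ ℓ)) : ℕ) = layerStart k ℓ + (p : ℕ)
      have h1 : ((hinv.toPerm f p : Fin (k ^ ℓ)) : ℕ) = digitRev k ℓ (p : ℕ) := by
        simp [Function.Involutive.coe_toPerm, hf]
      rw [h1, digitRev_invol k hk1 ℓ _ p.isLt]
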